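/- arXiv:2210.14856 — 6 statements merged into one kernel-verified Lean document; each statement's English description precedes it below -/
import Mathlib

section
/- Let S be an Arf numerical semigroup with multiplicity 3 and conductor s ≥ 3 with s ≡ 0 (mod 3). Then S = ⟨3, s+1, s+2⟩, PF(S) = {s−2, s−1}, the unique RF-matrix of s−2 is the 3×3 matrix with rows (−1, 1, 0), ((s−3)/3, −1, 1), (2s/3, 0, −1), and the unique RF-matrix of s−1 is the 3×3 matrix with rows (−1, 0, 1), (2s/3, −1, 0), (s/3, 1, −1). -/
/-!
Multiples of `3` lie in `S`, and `s - 1 ∉ S` by minimality of the conductor. The Arf condition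
applied to `s - 3 ≤ s - 2` shows that `s - 2 ∉ S` as well. Any `n ∈ S` below `s` that is not a
multiple of `3` would, after adding a multiple of `3`, land on `s - 2` or `s - 1`; hence
`S = 3ℕ ∪ [s, ∞)`. Everything else is read off this description: the generators, the
pseudo-Frobenius numbers, and the RF-matrices: since `f < s`, the coefficients of `s + 1` and
`s + 2` in a row can only be `0` or `1`, and the row equation then fixes the rest.
-/

/-- `S ⊆ ℕ` is a numerical semigroup: contains `0`, closed under addition,
and has finite complement in `ℕ`. -/
def IsNumericalSemigroup (S : Set ℕ) : Prop :=
  0 ∈ S ∧ (∀ a ∈ S, ∀ b ∈ S, a + b ∈ S) ∧ (Sᶜ).Finite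

/-- `S` satisfies the Arf condition: for `x ≤ y` in `S`, `2y - x ∈ S`. -/
def IsArf (S : Set ℕ) : Prop :=
  ∀ x ∈ S, ∀ y ∈ S, x ≤ y → 2 * y - x ∈ S

/-- `m` is the multiplicity of `S`: the smallest nonzero element. -/
def HasMultiplicity (S : Set ℕ) (m : ℕ) : Prop :=
  m ∈ S ∧ m ≠ 0 ∧ ∀ n ∈ S, n ≠ 0 → m ≤ n

/-- `s` is the conductor of `S`: the least `t` with `[t, ∞) ⊆ S`. -/
def HasConductor (S : Set ℕ) (s : ℕ) : Prop :=
  (∀ n, s ≤ n → n ∈ S) ∧ ∀ t, (∀ n, t ≤ n → n ∈ S) → s ≤ t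

/-- The set of pseudo-Frobenius numbers of `S`. -/
def pseudoFrobeniusSet (S : Set ℕ) : Set ℕ :=
  {z | z ∉ S ∧ ∀ n ∈ S, n ≠ 0 → z + n ∈ S}

/-- `A` is a row-factorization (RF-) matrix of `f` with respect to generators `n`:
diagonal entries are `-1`, off-diagonal entries are nonnegative, and every row
gives a representation of `f` in terms of the generators. -/
def IsRFMatrix {e : ℕ} (n : Fin e → ℕ) (f : ℤ) (A : Matrix (Fin e) (Fin e) ℤ) : Prop :=
  (∀ i, A i i = -1) ∧ (∀ i j, i ≠ j → 0 ≤ A i j) ∧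
    (∀ i, f = ∑ j, A i j * (n j : ℤ))

def IsNumericalSemigroup.toAddSubmonoid {S : Set ℕ} (hS : IsNumericalSemigroup S) :
    AddSubmonoid ℕ where
  carrier := S
  zero_mem' := hS.1
  add_mem' := fun ha hb ↦ hS.2.1 _ ha _ hb

theorem AddSubmonoid.mem_of_dvd_sub {M : AddSubmonoid ℕ} {m a b : ℕ} (hm : m ∈ M) (ha : a ∈ M)
    (hab : a ≤ b) (hdvd : m ∣ b - a) : b ∈ M := by
  obtain ⟨k, hk⟩ := hdvd
  have hb : b = a + k • m := by rw [smul_eq_mul, mul_comm, ← hk]; omega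
  exact hb ▸ add_mem ha (nsmul_mem hm k)

theorem IsNumericalSemigroup.mem_of_dvd_sub {S : Set ℕ} (hS : IsNumericalSemigroup S) {m a b : ℕ}
    (hm : m ∈ S) (ha : a ∈ S) (hab : a ≤ b) (hdvd : m ∣ b - a) : b ∈ S :=
  AddSubmonoid.mem_of_dvd_sub (M := hS.toAddSubmonoid) hm ha hab hdvd

theorem HasConductor.sub_one_notMem {S : Set ℕ} {s : ℕ} (hcon : HasConductor S s) (hs : 0 < s) :
    s - 1 ∉ S := by
  intro h
  have := hcon.2 (s - 1) fun n hn ↦ by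
    rcases (by omega : n = s - 1 ∨ s ≤ n) with rfl | hsn
    exacts [h, hcon.1 n hsn]
  omega

def multiplesOrAbove (m s : ℕ) : AddSubmonoid ℕ where
  carrier := {n | m ∣ n ∨ s ≤ n}
  zero_mem' := Or.inl (dvd_zero m)
  add_mem' := by
    rintro a b (ha | ha) (hb | hb)
    exacts [Or.inl (dvd_add ha hb), Or.inr (le_add_left hb), Or.inr (le_add_right ha),
      Or.inr (le_add_right ha)]

@[simp]
theorem mem_multiplesOrAbove {m s n : ℕ} : n ∈ multiplesOrAbove m s ↔ m ∣ n ∨ s ≤ n := Iff.rfl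

theorem closure_insert_Ioo_eq_multiplesOrAbove {m s : ℕ} (hm : 0 < m) (hms : m ∣ s) :
    AddSubmonoid.closure (insert m (Set.Ioo s (s + m))) = multiplesOrAbove m s := by
  apply le_antisymm
  · rw [AddSubmonoid.closure_le]
    rintro n (rfl | ⟨hsn, -⟩)
    exacts [Or.inl dvd_rfl, Or.inr hsn.le]
  have hmC : m ∈ AddSubmonoid.closure (insert m (Set.Ioo s (s + m))) :=
    AddSubmonoid.subset_closure (Set.mem_insert m _)
  intro n hn
  by_cases hr : m ∣ n
  · exact AddSubmonoid.mem_of_dvd_sub hmC (zero_mem _) n.zero_le (by simpa using hr)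
  have hsn : s ≤ n := hn.resolve_left hr
  -- `n` is `s + n % m` plus a multiple of `m`, and `s < s + n % m < s + m` is a generator.
  obtain ⟨q, rfl⟩ := hms
  have hdiv := Nat.mod_add_div n m
  have hq : m * q ≤ m * (n / m) :=
    Nat.mul_le_mul_left m ((Nat.le_div_iff_mul_le hm).2 (by rwa [mul_comm] at hsn))
  have hr0 : n % m ≠ 0 := fun h ↦ hr (Nat.dvd_of_mod_eq_zero h)
  have hgen : m * q + n % m ∈ Set.Ioo (m * q) (m * q + m) :=
    ⟨by omega, Nat.add_lt_add_left (Nat.mod_lt n hm) _⟩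
  refine AddSubmonoid.mem_of_dvd_sub hmC
    (AddSubmonoid.subset_closure (Set.mem_insert_of_mem m hgen)) (by omega) ⟨n / m - q, ?_⟩
  rw [Nat.mul_sub]
  omega

theorem pseudoFrobeniusSet_multiplesOrAbove {m s : ℕ} (hms : m ∣ s) :
    pseudoFrobeniusSet (multiplesOrAbove m s) = Set.Ioo (s - m) s := by
  ext z
  simp only [pseudoFrobeniusSet, Set.mem_ofPred_eq, SetLike.mem_coe, mem_multiplesOrAbove,
    Set.mem_Ioo, not_or, not_le]
  constructor
  · rintro ⟨⟨hz, hzs⟩, hall⟩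
    have hm : m ≠ 0 := by rintro rfl; simp at hms; omega
    rcases hall m (Or.inl dvd_rfl) hm with h | h
    · exact absurd ((Nat.dvd_add_left dvd_rfl).1 h) hz
    · have : z ≠ s - m := fun h ↦ hz (h ▸ Nat.dvd_sub hms dvd_rfl)
      omega
  · rintro ⟨hsz, hzs⟩
    have hz : ¬m ∣ z := fun hz ↦ by
      have := Nat.le_of_dvd (by omega) (Nat.dvd_sub hms hz)
      omega
    refine ⟨⟨hz, hzs⟩, fun n hn hn0 ↦ Or.inr ?_⟩
    rcases hn with hn | hn
    · have := Nat.le_of_dvd (Nat.pos_of_ne_zero hn0) hn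
      omega
    · omega

theorem IsArf.eq_multiplesOrAbove_three {S : Set ℕ} {s : ℕ} (hArf : IsArf S)
    (hNS : IsNumericalSemigroup S) (h3 : 3 ∈ S) (hcon : HasConductor S s) (hs : 0 < s)
    (hmod : 3 ∣ s) : S = multiplesOrAbove 3 s := by
  have hs1 : s - 1 ∉ S := hcon.sub_one_notMem hs
  have hs2 : s - 2 ∉ S := fun h ↦ by
    have hs3 : s - 3 ∈ S := hNS.mem_of_dvd_sub h3 hNS.1 (Nat.zero_le _) (by omega)
    exact hs1 (by convert hArf (s - 3) hs3 (s - 2) h (by omega) using 1; omega)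
  ext n
  constructor
  · intro hn
    by_contra hne
    simp only [SetLike.mem_coe, mem_multiplesOrAbove, not_or, not_le] at hne
    rcases (by omega : n % 3 = 1 ∨ n % 3 = 2) with h | h
    · exact hs2 (hNS.mem_of_dvd_sub (b := s - 2) h3 hn (by omega) (by omega))
    · exact hs1 (hNS.mem_of_dvd_sub (b := s - 1) h3 hn (by omega) (by omega))
  · rintro (h | h)
    · exact hNS.mem_of_dvd_sub h3 hNS.1 (Nat.zero_le _) (by simpa using h)
    · exact hcon.1 n h

theorem isRFMatrix_fin_three_iff (n : Fin 3 → ℕ) (f : ℤ) (A : Matrix (Fin 3) (Fin 3) ℤ) :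
    IsRFMatrix n f A ↔
      (A 0 0 = -1 ∧ 0 ≤ A 0 1 ∧ 0 ≤ A 0 2 ∧ f + n 0 = A 0 1 * n 1 + A 0 2 * n 2) ∧
      (A 1 1 = -1 ∧ 0 ≤ A 1 0 ∧ 0 ≤ A 1 2 ∧ f + n 1 = A 1 0 * n 0 + A 1 2 * n 2) ∧
      (A 2 2 = -1 ∧ 0 ≤ A 2 0 ∧ 0 ≤ A 2 1 ∧ f + n 2 = A 2 0 * n 0 + A 2 1 * n 1) := by
  simp only [IsRFMatrix, Fin.forall_fin_succ, Fin.sum_univ_three]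
  grind

theorem Matrix.fin_three_eq_iff {α : Type*} (A : Matrix (Fin 3) (Fin 3) α)
    (a b c d e f g h i : α) :
    A = !![a, b, c; d, e, f; g, h, i] ↔
      (A 0 0 = a ∧ A 0 1 = b ∧ A 0 2 = c) ∧ (A 1 0 = d ∧ A 1 1 = e ∧ A 1 2 = f) ∧
        A 2 0 = g ∧ A 2 1 = h ∧ A 2 2 = i := by
  rw [A.eta_fin_three]
  simp

theorem Int.eq_zero_or_eq_one_of_mul_lt_two_mul {b c : ℤ} (hb : 0 ≤ b) (hc : 0 ≤ c)
    (h : b * c < 2 * c) : b = 0 ∨ b = 1 := by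
  have := lt_of_mul_lt_mul_right h hc
  omega

theorem IsRFMatrix.eq_zero_or_eq_one_of_lt {s : ℕ} {f : ℤ} {A : Matrix (Fin 3) (Fin 3) ℤ}
    (hA : IsRFMatrix ![3, s + 1, s + 2] f A) (hs : 0 < s) (hf : f < s) :
    (A 0 1 = 0 ∨ A 0 1 = 1) ∧ (A 0 2 = 0 ∨ A 0 2 = 1) ∧ (A 1 2 = 0 ∨ A 1 2 = 1) ∧
      (A 2 1 = 0 ∨ A 2 1 = 1) := by
  rw [isRFMatrix_fin_three_iff] at hA
  simp only [Matrix.cons_val_zero, Matrix.cons_val_one, Matrix.cons_val, Nat.cast_ofNat,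
    Nat.cast_add, Nat.cast_one] at hA
  obtain ⟨⟨-, p01, p02, e0⟩, ⟨-, p10, p12, e1⟩, -, p20, p21, e2⟩ := hA
  exact ⟨Int.eq_zero_or_eq_one_of_mul_lt_two_mul p01 (c := s + 1) (by positivity) (by nlinarith),
    Int.eq_zero_or_eq_one_of_mul_lt_two_mul p02 (c := s + 2) (by positivity) (by nlinarith),
    Int.eq_zero_or_eq_one_of_mul_lt_two_mul p12 (c := s + 2) (by positivity) (by nlinarith),
    Int.eq_zero_or_eq_one_of_mul_lt_two_mul p21 (c := s + 1) (by positivity) (by nlinarith)⟩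

theorem isRFMatrix_sub_two_iff {s : ℕ} (hs : 0 < s) (hmod : 3 ∣ s) (A : Matrix (Fin 3) (Fin 3) ℤ) :
    IsRFMatrix ![3, s + 1, s + 2] ((s : ℤ) - 2) A ↔
      A = !![-1, 1, 0; ((s : ℤ) - 3) / 3, -1, 1; 2 * (s : ℤ) / 3, 0, -1] := by
  constructor
  · intro hA
    obtain ⟨b01, b02, b12, b21⟩ := hA.eq_zero_or_eq_one_of_lt hs (by omega)
    rw [isRFMatrix_fin_three_iff] at hA
    rw [Matrix.fin_three_eq_iff]
    simp only [Matrix.cons_val_zero, Matrix.cons_val_one, Matrix.cons_val, Nat.cast_ofNat,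
      Nat.cast_add, Nat.cast_one] at hA
    obtain ⟨⟨d0, -, -, e0⟩, ⟨d1, -, -, e1⟩, d2, -, -, e2⟩ := hA
    rcases b01 with h01 | h01 <;> rcases b02 with h02 | h02 <;> rcases b12 with h12 | h12 <;>
      rcases b21 with h21 | h21 <;>
      simp only [h01, h02, h12, h21, one_mul, zero_mul, add_zero, zero_add] at e0 e1 e2 <;>
      omega
  · rintro rfl
    rw [isRFMatrix_fin_three_iff]
    simp only [Matrix.of_apply, Matrix.cons_val', Matrix.cons_val_zero, Matrix.cons_val_one,
      Matrix.cons_val, Matrix.cons_val_fin_one, Nat.cast_ofNat, Nat.cast_add, Nat.cast_one,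
      zero_le_one, le_refl, one_mul, zero_mul, add_zero, true_and]
    omega

theorem isRFMatrix_sub_one_iff {s : ℕ} (hs : 0 < s) (hmod : 3 ∣ s) (A : Matrix (Fin 3) (Fin 3) ℤ) :
    IsRFMatrix ![3, s + 1, s + 2] ((s : ℤ) - 1) A ↔
      A = !![-1, 0, 1; 2 * (s : ℤ) / 3, -1, 0; (s : ℤ) / 3, 1, -1] := by
  constructor
  · intro hA
    obtain ⟨b01, b02, b12, b21⟩ := hA.eq_zero_or_eq_one_of_lt hs (by omega)
    rw [isRFMatrix_fin_three_iff] at hA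
    rw [Matrix.fin_three_eq_iff]
    simp only [Matrix.cons_val_zero, Matrix.cons_val_one, Matrix.cons_val, Nat.cast_ofNat,
      Nat.cast_add, Nat.cast_one] at hA
    obtain ⟨⟨d0, -, -, e0⟩, ⟨d1, -, -, e1⟩, d2, -, -, e2⟩ := hA
    rcases b01 with h01 | h01 <;> rcases b02 with h02 | h02 <;> rcases b12 with h12 | h12 <;>
      rcases b21 with h21 | h21 <;>
      simp only [h01, h02, h12, h21, one_mul, zero_mul, add_zero, zero_add] at e0 e1 e2 <;>
      omega
  · rintro rfl
    rw [isRFMatrix_fin_three_iff]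
    simp only [Matrix.of_apply, Matrix.cons_val', Matrix.cons_val_zero, Matrix.cons_val_one,
      Matrix.cons_val, Matrix.cons_val_fin_one, Nat.cast_ofNat, Nat.cast_add, Nat.cast_one,
      zero_le_one, le_refl, one_mul, zero_mul, add_zero, true_and]
    omega

/-- Arf numerical semigroup with multiplicity `3`, conductor `s ≥ 3`,
`s ≡ 0 (mod 3)`: `S = ⟨3, s+1, s+2⟩`, `PF(S) = {s-2, s-1}`, and the unique RF-matrices
of `s-2` and `s-1` are as displayed. -/
theorem arf_mult_three_mod_zero (S : Set ℕ) (s : ℕ)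
    (hNS : IsNumericalSemigroup S) (hArf : IsArf S)
    (hmul : HasMultiplicity S 3) (hcon : HasConductor S s)
    (hs : 3 ≤ s) (hmod : s % 3 = 0) :
    S = (AddSubmonoid.closure ({3, s + 1, s + 2} : Set ℕ) : Set ℕ) ∧
    pseudoFrobeniusSet S = {s - 2, s - 1} ∧
    (∀ A : Matrix (Fin 3) (Fin 3) ℤ,
      IsRFMatrix ![3, s + 1, s + 2] ((s : ℤ) - 2) A ↔
        A = !![-1, 1, 0; ((s : ℤ) - 3) / 3, -1, 1; 2 * (s : ℤ) / 3, 0, -1]) ∧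
    (∀ A : Matrix (Fin 3) (Fin 3) ℤ,
      IsRFMatrix ![3, s + 1, s + 2] ((s : ℤ) - 1) A ↔
        A = !![-1, 0, 1; 2 * (s : ℤ) / 3, -1, 0; (s : ℤ) / 3, 1, -1]) := by
  have hdvd : 3 ∣ s := Nat.dvd_of_mod_eq_zero hmod
  have hS : S = multiplesOrAbove 3 s :=
    hArf.eq_multiplesOrAbove_three hNS hmul.1 hcon (by omega) hdvd
  have hgen : ({3, s + 1, s + 2} : Set ℕ) = insert 3 (Set.Ioo s (s + 3)) := by
    ext n
    simp only [Set.mem_insert_iff, Set.mem_singleton_iff, Set.mem_Ioo]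
    omega
  have hPF : Set.Ioo (s - 3) s = {s - 2, s - 1} := by
    ext n
    simp only [Set.mem_insert_iff, Set.mem_singleton_iff, Set.mem_Ioo]
    omega
  refine ⟨?_, ?_, isRFMatrix_sub_two_iff (by omega) hdvd, isRFMatrix_sub_one_iff (by omega) hdvd⟩
  · rw [hS, hgen, closure_insert_Ioo_eq_multiplesOrAbove (by norm_num) hdvd]
  · rw [hS, pseudoFrobeniusSet_multiplesOrAbove hdvd, hPF]
end

section
/- Let S be an Arf numerical semigroup with multiplicity 4 and even conductor s, of the form S = ⟨4, 4k+2, s+1, s+3⟩ for some positive integer k with 4k+2 < s+1 (i.e., 1 ≤ k < s/4 if s ≡ 0 (mod 4), and 1 ≤ k ≤ (s−2)/4 if s ≡ 2 (mod 4)). Then PF(S) = {4k−2, s−3, s−1}, and the unique RF-matrix of the pseudo-Frobenius number 4k−2 is the 4×4 matrix with rows (−1, 1, 0, 0), (2k, −1, 0, 0), (k−1, 0, −1, 1), (k, 0, 1, −1). -/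
/-
Modulo 4 the generators show that `⟨4, 4k+2, s+1, s+3⟩` consists of the multiples of 4, the
numbers `≡ 2 (mod 4)` from `4k+2` on, and everything from `s` on: since `s` is even, an odd number
`≥ s` is `s+1` or `s+3` plus a multiple of 4. The pseudo-Frobenius numbers are read off this
description. In each row of an RF-matrix of `4k-2`, size forces the coefficients of `s+1` and
`s+3` to be at most 1, and then size and parity (`s` even) leave only the displayed row.
-/

/-- The semigroup `⟨4, 4k+2, s+1, s+3⟩` (for even `s ≥ 4k+2`), described by residues mod 4. -/
def arfFourEven (k s : ℕ) : AddSubmonoid ℕ where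
  carrier := {n | n % 4 = 0 ∨ (n % 4 = 2 ∧ 4 * k + 2 ≤ n) ∨ s ≤ n}
  zero_mem' := by simp
  add_mem' := by
    intro a b ha hb
    simp only [Set.mem_ofPred_eq] at ha hb ⊢
    omega

section

variable {k s : ℕ}

theorem mem_arfFourEven {n : ℕ} :
    n ∈ arfFourEven k s ↔ n % 4 = 0 ∨ (n % 4 = 2 ∧ 4 * k + 2 ≤ n) ∨ s ≤ n :=
  Iff.rfl

theorem closure_eq_arfFourEven (hs : Even s) (hks : 4 * k + 2 ≤ s) :
    AddSubmonoid.closure ({4, 4 * k + 2, s + 1, s + 3} : Set ℕ) = arfFourEven k s := by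
  set M := AddSubmonoid.closure ({4, 4 * k + 2, s + 1, s + 3} : Set ℕ)
  refine le_antisymm ?_ fun n hn => ?_
  · rw [AddSubmonoid.closure_le]
    intro g hg
    simp only [Set.mem_insert_iff, Set.mem_singleton_iff] at hg
    rw [SetLike.mem_coe, mem_arfFourEven]
    omega
  have mem_of_four_dvd : ∀ m, 4 ∣ m → m ∈ M := by
    rintro _ ⟨q, rfl⟩
    rw [mul_comm, ← smul_eq_mul]
    exact nsmul_mem (AddSubmonoid.subset_closure (by simp)) q
  have shift_mem : ∀ g ∈ ({4, 4 * k + 2, s + 1, s + 3} : Set ℕ), g ≤ n → 4 ∣ n - g → n ∈ M :=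
    fun g hg hgn hdvd => by
      rw [← Nat.add_sub_cancel' hgn]
      exact add_mem (AddSubmonoid.subset_closure hg) (mem_of_four_dvd _ hdvd)
  obtain ⟨t, rfl⟩ := hs
  rw [mem_arfFourEven] at hn
  have : 4 ∣ n ∨ (4 * k + 2 ≤ n ∧ 4 ∣ n - (4 * k + 2)) ∨ (t + t + 1 ≤ n ∧ 4 ∣ n - (t + t + 1)) ∨
      (t + t + 3 ≤ n ∧ 4 ∣ n - (t + t + 3)) := by
    omega
  rcases this with h | ⟨hle, h⟩ | ⟨hle, h⟩ | ⟨hle, h⟩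
  · exact mem_of_four_dvd n h
  all_goals exact shift_mem _ (by simp) hle h

theorem pseudoFrobeniusSet_arfFourEven (hk : 1 ≤ k) (hs : Even s) (hks : 4 * k + 2 ≤ s) :
    pseudoFrobeniusSet (arfFourEven k s) = {4 * k - 2, s - 3, s - 1} := by
  obtain ⟨t, rfl⟩ := hs
  ext z
  simp only [pseudoFrobeniusSet, Set.mem_ofPred_eq, Set.mem_insert_iff, Set.mem_singleton_iff,
    SetLike.mem_coe, mem_arfFourEven]
  constructor
  · rintro ⟨hz, hz4⟩
    have := hz4 4 (by omega) (by omega)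
    omega
  · rintro (rfl | rfl | rfl) <;> exact ⟨by omega, fun n hn hn0 => by omega⟩

end

section RFRows

variable {k s a b c : ℤ}

theorem rfRow_zero_unique (hk : 0 ≤ k) (hks : 4 * k + 2 ≤ s)
    (ha : 0 ≤ a) (hb : 0 ≤ b) (hc : 0 ≤ c)
    (h : -4 + a * (4 * k + 2) + b * (s + 1) + c * (s + 3) = 4 * k - 2) :
    a = 1 ∧ b = 0 ∧ c = 0 := by
  have hb0 : b = 0 := by nlinarith [mul_nonneg ha (by linarith : (0 : ℤ) ≤ 4 * k + 2)]
  have hc0 : c = 0 := by nlinarith [mul_nonneg ha (by linarith : (0 : ℤ) ≤ 4 * k + 2)]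
  subst hb0 hc0
  exact ⟨by nlinarith, rfl, rfl⟩

theorem rfRow_one_unique (hk : 0 ≤ k) (hs : Even s) (hks : 4 * k + 2 ≤ s)
    (ha : 0 ≤ a) (hb : 0 ≤ b) (hc : 0 ≤ c)
    (h : 4 * a - (4 * k + 2) + b * (s + 1) + c * (s + 3) = 4 * k - 2) :
    a = 2 * k ∧ b = 0 ∧ c = 0 := by
  have hb1 : b ≤ 1 := by nlinarith [mul_nonneg hc (by linarith : (0 : ℤ) ≤ s + 3)]
  have hc1 : c ≤ 1 := by nlinarith [mul_nonneg hb (by linarith : (0 : ℤ) ≤ s + 1)]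
  obtain ⟨t, rfl⟩ := hs
  interval_cases b <;> interval_cases c <;> omega

theorem rfRow_two_unique (hk : 0 ≤ k) (hs : Even s) (hks : 4 * k + 2 ≤ s)
    (ha : 0 ≤ a) (hb : 0 ≤ b) (hc : 0 ≤ c)
    (h : 4 * a + b * (4 * k + 2) - (s + 1) + c * (s + 3) = 4 * k - 2) :
    a = k - 1 ∧ b = 0 ∧ c = 1 := by
  have hb_mul : 0 ≤ b * (4 * k + 2) := mul_nonneg hb (by linarith)
  have hc2 : c ≤ 1 := by nlinarith
  interval_cases c
  · obtain ⟨t, rfl⟩ := hs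
    have : b * (4 * k + 2) = 2 * (b * (2 * k + 1)) := by ring
    omega
  · have hb0 : b = 0 := by nlinarith
    subst hb0
    exact ⟨by linarith, rfl, rfl⟩

theorem rfRow_three_unique (hk : 0 ≤ k) (hs : Even s) (hks : 4 * k + 2 ≤ s)
    (ha : 0 ≤ a) (hb : 0 ≤ b) (hc : 0 ≤ c)
    (h : 4 * a + b * (4 * k + 2) + c * (s + 1) - (s + 3) = 4 * k - 2) :
    a = k ∧ b = 0 ∧ c = 1 := by
  have hb_mul : 0 ≤ b * (4 * k + 2) := mul_nonneg hb (by linarith)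
  have hc2 : c ≤ 1 := by nlinarith
  interval_cases c
  · obtain ⟨t, rfl⟩ := hs
    have : b * (4 * k + 2) = 2 * (b * (2 * k + 1)) := by ring
    omega
  · have hb0 : b = 0 := by nlinarith
    subst hb0
    exact ⟨by linarith, rfl, rfl⟩

end RFRows

theorem isRFMatrix_arfFourEven_iff {k s : ℕ} (hk : 1 ≤ k) (hs : Even s) (hks : 4 * k + 2 ≤ s)
    (A : Matrix (Fin 4) (Fin 4) ℤ) :
    IsRFMatrix ![4, 4 * k + 2, s + 1, s + 3] (4 * (k : ℤ) - 2) A ↔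
      A = !![-1, 1, 0, 0;
             2 * (k : ℤ), -1, 0, 0;
             (k : ℤ) - 1, 0, -1, 1;
             (k : ℤ), 0, 1, -1] := by
  have hkZ : (0 : ℤ) ≤ k := Int.natCast_nonneg k
  have hsZ : Even (s : ℤ) := by exact_mod_cast hs
  have hksZ : 4 * (k : ℤ) + 2 ≤ s := by exact_mod_cast hks
  constructor
  · rintro ⟨hdiag, hoff, hrow⟩
    have row : ∀ i, 4 * (k : ℤ) - 2 =
        A i 0 * 4 + A i 1 * (4 * k + 2) + A i 2 * (s + 1) + A i 3 * (s + 3) := fun i => by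
      simpa [Fin.sum_univ_four] using hrow i
    obtain ⟨r01, r02, r03⟩ := rfRow_zero_unique hkZ hksZ (hoff 0 1 (by decide))
      (hoff 0 2 (by decide)) (hoff 0 3 (by decide)) (by linear_combination -row 0 - 4 * hdiag 0)
    obtain ⟨r10, r12, r13⟩ := rfRow_one_unique hkZ hsZ hksZ (hoff 1 0 (by decide))
      (hoff 1 2 (by decide)) (hoff 1 3 (by decide))
      (by linear_combination -row 1 - (4 * k + 2) * hdiag 1)
    obtain ⟨r20, r21, r23⟩ := rfRow_two_unique hkZ hsZ hksZ (hoff 2 0 (by decide))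
      (hoff 2 1 (by decide)) (hoff 2 3 (by decide))
      (by linear_combination -row 2 - (s + 1) * hdiag 2)
    obtain ⟨r30, r31, r32⟩ := rfRow_three_unique hkZ hsZ hksZ (hoff 3 0 (by decide))
      (hoff 3 1 (by decide)) (hoff 3 2 (by decide))
      (by linear_combination -row 3 - (s + 3) * hdiag 3)
    ext i j
    fin_cases i <;> fin_cases j <;> simp [*]
  · rintro rfl
    refine ⟨fun i => by fin_cases i <;> rfl, fun i j hij => ?_, fun i => ?_⟩
    · fin_cases i <;> fin_cases j <;> simp_all
    · fin_cases i <;>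
        simp only [Fin.sum_univ_four, Fin.isValue, Fin.reduceFinMk, Matrix.of_apply,
          Matrix.cons_val', Matrix.cons_val, Matrix.cons_val_zero, Matrix.cons_val_one, Matrix.cons_val_fin_one,
          Nat.cast_add, Nat.cast_mul, Nat.cast_ofNat, Nat.cast_one] <;>
        ring

theorem arf_mult_four_even_general (S : Set ℕ) (s k : ℕ)
    (heven : Even s) (hk1 : 1 ≤ k) (hk2 : 4 * k + 2 < s + 1)
    (hS : S = (AddSubmonoid.closure ({4, 4 * k + 2, s + 1, s + 3} : Set ℕ) : Set ℕ)) :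
    pseudoFrobeniusSet S = {4 * k - 2, s - 3, s - 1} ∧
    (∀ A : Matrix (Fin 4) (Fin 4) ℤ,
      IsRFMatrix ![4, 4 * k + 2, s + 1, s + 3] (4 * (k : ℤ) - 2) A ↔
        A = !![-1, 1, 0, 0;
               2 * (k : ℤ), -1, 0, 0;
               (k : ℤ) - 1, 0, -1, 1;
               (k : ℤ), 0, 1, -1]) := by
  have hks : 4 * k + 2 ≤ s := by omega
  rw [hS, closure_eq_arfFourEven heven hks]
  exact ⟨pseudoFrobeniusSet_arfFourEven hk1 heven hks, isRFMatrix_arfFourEven_iff hk1 heven hks⟩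

/-- Arf numerical semigroup with multiplicity `4`, even conductor `s`,
of the form `S = ⟨4, 4k+2, s+1, s+3⟩` with `1 ≤ k` and `4k+2 < s+1`: then
`PF(S) = {4k-2, s-3, s-1}` and the unique RF-matrix of `4k-2` is as displayed. -/
theorem arf_mult_four_even (S : Set ℕ) (s k : ℕ)
    (hNS : IsNumericalSemigroup S) (hArf : IsArf S)
    (hmul : HasMultiplicity S 4) (hcon : HasConductor S s)
    (heven : Even s) (hk1 : 1 ≤ k) (hk2 : 4 * k + 2 < s + 1)
    (hS : S = (AddSubmonoid.closure ({4, 4 * k + 2, s + 1, s + 3} : Set ℕ) : Set ℕ)) :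
    pseudoFrobeniusSet S = {4 * k - 2, s - 3, s - 1} ∧
    (∀ A : Matrix (Fin 4) (Fin 4) ℤ,
      IsRFMatrix ![4, 4 * k + 2, s + 1, s + 3] (4 * (k : ℤ) - 2) A ↔
        A = !![-1, 1, 0, 0;
               2 * (k : ℤ), -1, 0, 0;
               (k : ℤ) - 1, 0, -1, 1;
               (k : ℤ), 0, 1, -1]) :=
  arf_mult_four_even_general S s k heven hk1 hk2 hS
end

section
/- Let S be an Arf numerical semigroup with multiplicity 5 and conductor s > 5 with s ≡ 0 (mod 5), of the form S = ⟨5, s−2, s+1, s+2, s+4⟩. Then PF(S) = {s−7, s−4, s−3, s−1}, and the unique RF-matrix of the pseudo-Frobenius number s−7 is the 5×5 matrix with rows (−1, 1, 0, 0, 0), ((s−10)/5, −1, 1, 0, 0), ((s−10)/5, 0, −1, 0, 1), ((2s−5)/5, 0, 0, −1, 0), ((s−5)/5, 0, 0, 1, −1). -/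
open Finset

theorem sum_mul_eq_add_sum_update_zero {ι R : Type*} [Fintype ι] [DecidableEq ι]
    [NonUnitalNonAssocSemiring R] (v n : ι → R) (i : ι) :
    ∑ j, v j * n j = v i * n i + ∑ j, Function.update v i 0 j * n j := by
  rw [← add_sum_erase _ _ (mem_univ i), ← add_sum_erase _ _ (mem_univ i)]
  simp only [Function.update_self, zero_mul, zero_add]
  congr 1
  exact sum_congr rfl fun j hj => by rw [Function.update_of_ne (ne_of_mem_erase hj)]

theorem coe_closure_eq_setOf {s : ℕ} (hs : 5 < s) (hmod : s % 5 = 0) :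
    (AddSubmonoid.closure ({5, s - 2, s + 1, s + 2, s + 4} : Set ℕ) : Set ℕ) =
      {x | x % 5 = 0 ∨ x = s - 2 ∨ s ≤ x} := by
  set M := AddSubmonoid.closure ({5, s - 2, s + 1, s + 2, s + 4} : Set ℕ)
  let T : AddSubmonoid ℕ :=
    { carrier := {x | x % 5 = 0 ∨ x = s - 2 ∨ s ≤ x}
      zero_mem' := by simp
      add_mem' := fun {a b} ha hb => by simp only [Set.mem_ofPred_eq] at *; omega }
  have hMT : M ≤ T := AddSubmonoid.closure_le.2 fun y hy => by
    simp only [Set.mem_insert_iff, Set.mem_singleton_iff] at hy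
    show y % 5 = 0 ∨ y = s - 2 ∨ s ≤ y
    omega
  have hshift : ∀ b ∈ ({0, s - 2, s + 1, s + 2, s + 4} : Set ℕ), ∀ k, b + 5 * k ∈ M := by
    intro b hb k
    have h5 : 5 ∈ M := AddSubmonoid.subset_closure (by simp)
    refine M.add_mem ?_ (by simpa [mul_comm] using M.nsmul_mem h5 k)
    rcases hb with rfl | hb
    · exact M.zero_mem
    · exact AddSubmonoid.subset_closure (by simp_all)
  refine subset_antisymm hMT fun x hx => ?_
  have hx' : x % 5 = 0 ∨ x = s - 2 ∨ s ≤ x := hx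
  obtain ⟨b, hb, k, rfl⟩ : ∃ b ∈ ({0, s - 2, s + 1, s + 2, s + 4} : Set ℕ), ∃ k, x = b + 5 * k := by
    have : x % 5 < 5 := Nat.mod_lt _ (by norm_num)
    interval_cases hr : x % 5
    · exact ⟨0, by simp, x / 5, by omega⟩
    · exact ⟨s + 1, by simp, (x - (s + 1)) / 5, by omega⟩
    · exact ⟨s + 2, by simp, (x - (s + 2)) / 5, by omega⟩
    · exact ⟨s - 2, by simp, (x - (s - 2)) / 5, by omega⟩
    · exact ⟨s + 4, by simp, (x - (s + 4)) / 5, by omega⟩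
  exact hshift b hb k

theorem pseudoFrobeniusSet_setOf {s : ℕ} (hs : 5 < s) (hmod : s % 5 = 0) :
    pseudoFrobeniusSet {x | x % 5 = 0 ∨ x = s - 2 ∨ s ≤ x} = {s - 7, s - 4, s - 3, s - 1} := by
  ext z
  simp only [pseudoFrobeniusSet, Set.mem_ofPred_eq, Set.mem_insert_iff, Set.mem_singleton_iff]
  constructor
  · rintro ⟨hz, hall⟩
    have := hall 5 (by norm_num) (by norm_num)
    omega
  · intro hz
    exact ⟨by omega, fun n hn hn0 => by omega⟩

theorem factorization_cases {s a b c d e N : ℤ} (hs : 3 < s) (ha : 0 ≤ a) (hb : 0 ≤ b)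
    (hc : 0 ≤ c) (hd : 0 ≤ d) (he : 0 ≤ e) (hN : N ≤ 2 * s - 3)
    (h : N = a * 5 + b * (s - 2) + c * (s + 1) + d * (s + 2) + e * (s + 4)) :
    (b = 0 ∧ c = 0 ∧ d = 0 ∧ e = 0 ∧ N = 5 * a) ∨
    (b = 1 ∧ c = 0 ∧ d = 0 ∧ e = 0 ∧ N = 5 * a + (s - 2)) ∨
    (b = 0 ∧ c = 1 ∧ d = 0 ∧ e = 0 ∧ N = 5 * a + (s + 1)) ∨
    (b = 0 ∧ c = 0 ∧ d = 1 ∧ e = 0 ∧ N = 5 * a + (s + 2)) ∨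
    (b = 0 ∧ c = 0 ∧ d = 0 ∧ e = 1 ∧ N = 5 * a + (s + 4)) ∨
    (b = 2 ∧ c = 0 ∧ d = 0 ∧ e = 0 ∧ N = 5 * a + 2 * (s - 2)) := by
  have hle : b + c + d + e ≤ 2 := by
    by_contra! h3
    nlinarith
  have hN' : N = 5 * a + (b + c + d + e) * s + (c + 2 * d + 4 * e - 2 * b) := by
    rw [h]; ring
  obtain ht | ht | ht : b + c + d + e = 0 ∨ b + c + d + e = 1 ∨ b + c + d + e = 2 := by omega
  · obtain ⟨rfl, rfl, rfl, rfl⟩ : b = 0 ∧ c = 0 ∧ d = 0 ∧ e = 0 := by omega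
    exact Or.inl ⟨rfl, rfl, rfl, rfl, by linarith⟩
  · obtain ⟨rfl, rfl, rfl, rfl⟩ | ⟨rfl, rfl, rfl, rfl⟩ | ⟨rfl, rfl, rfl, rfl⟩ | ⟨rfl, rfl, rfl, rfl⟩ :
        (b = 1 ∧ c = 0 ∧ d = 0 ∧ e = 0) ∨ (b = 0 ∧ c = 1 ∧ d = 0 ∧ e = 0) ∨
        (b = 0 ∧ c = 0 ∧ d = 1 ∧ e = 0) ∨ (b = 0 ∧ c = 0 ∧ d = 0 ∧ e = 1) := by omega
    · exact Or.inr <| Or.inl ⟨rfl, rfl, rfl, rfl, by linarith⟩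
    · exact Or.inr <| Or.inr <| Or.inl ⟨rfl, rfl, rfl, rfl, by linarith⟩
    · exact Or.inr <| Or.inr <| Or.inr <| Or.inl ⟨rfl, rfl, rfl, rfl, by linarith⟩
    · exact Or.inr <| Or.inr <| Or.inr <| Or.inr <| Or.inl ⟨rfl, rfl, rfl, rfl, by linarith⟩
  · have hsmall : 3 * c + 4 * d + 6 * e ≤ 1 := by rw [ht] at hN'; linarith
    obtain ⟨rfl, rfl, rfl, rfl⟩ : b = 2 ∧ c = 0 ∧ d = 0 ∧ e = 0 := by omega
    exact Or.inr <| Or.inr <| Or.inr <| Or.inr <| Or.inr ⟨rfl, rfl, rfl, rfl, by linarith⟩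

def rfMatrix (s : ℕ) : Matrix (Fin 5) (Fin 5) ℤ :=
  !![-1, 1, 0, 0, 0;
     ((s : ℤ) - 10) / 5, -1, 1, 0, 0;
     ((s : ℤ) - 10) / 5, 0, -1, 0, 1;
     (2 * (s : ℤ) - 5) / 5, 0, 0, -1, 0;
     ((s : ℤ) - 5) / 5, 0, 0, 1, -1]

theorem eq_rfMatrix_of_row {s : ℕ} (hs : 5 < s) (hmod : s % 5 = 0) (v : Fin 5 → ℤ) (i : Fin 5)
    (hvi : v i = -1) (hv : ∀ j, j ≠ i → 0 ≤ v j)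
    (hsum : (s : ℤ) - 7 = ∑ j, v j * ((![5, s - 2, s + 1, s + 2, s + 4] j : ℕ) : ℤ)) :
    v = rfMatrix s i := by
  set w := Function.update v i 0
  have hwi : w i = 0 := by simp [w]
  have hvw : ∀ j, j ≠ i → v j = w j := fun j hj => by simp [w, hj]
  have hw : ∀ j, 0 ≤ w j := fun j => by
    rcases eq_or_ne j i with rfl | hj
    · exact hwi.ge
    · exact hvw j hj ▸ hv j hj
  have hcast : ((s - 2 : ℕ) : ℤ) = s - 2 := by omega
  have hwsum : (s : ℤ) - 7 + ((![5, s - 2, s + 1, s + 2, s + 4] i : ℕ) : ℤ) =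
      w 0 * 5 + w 1 * (s - 2) + w 2 * (s + 1) + w 3 * (s + 2) + w 4 * (s + 4) := by
    rw [hsum, sum_mul_eq_add_sum_update_zero v _ i, hvi, Fin.sum_univ_five]
    simp [w, hcast]
  have key := factorization_cases (s := s) (by omega) (hw 0) (hw 1) (hw 2) (hw 3) (hw 4)
    (by fin_cases i <;> simp [hcast] <;> omega) hwsum
  clear_value w
  funext j
  rcases eq_or_ne j i with rfl | hj
  · fin_cases j <;> simpa [rfMatrix] using hvi
  rw [hvw j hj]
  fin_cases i <;> fin_cases j <;> simp [rfMatrix, hcast] at hj key hwi ⊢ <;> omega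

theorem isRFMatrix_rfMatrix {s : ℕ} (hs : 5 < s) (hmod : s % 5 = 0) :
    IsRFMatrix ![5, s - 2, s + 1, s + 2, s + 4] ((s : ℤ) - 7) (rfMatrix s) := by
  have hcast : ((s - 2 : ℕ) : ℤ) = s - 2 := by omega
  refine ⟨fun i => ?_, fun i j hij => ?_, fun i => ?_⟩
  · fin_cases i <;> rfl
  · fin_cases i <;> fin_cases j <;> simp [rfMatrix] at hij ⊢ <;> omega
  · fin_cases i <;> simp [Fin.sum_univ_five, rfMatrix, hcast] <;> omega

theorem isRFMatrix_iff_eq_rfMatrix {s : ℕ} (hs : 5 < s) (hmod : s % 5 = 0)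
    (A : Matrix (Fin 5) (Fin 5) ℤ) :
    IsRFMatrix ![5, s - 2, s + 1, s + 2, s + 4] ((s : ℤ) - 7) A ↔ A = rfMatrix s := by
  refine ⟨fun ⟨hdiag, hpos, hrow⟩ => ?_, fun hA => hA ▸ isRFMatrix_rfMatrix hs hmod⟩
  funext i
  exact eq_rfMatrix_of_row hs hmod (A i) i (hdiag i) (fun j hj => hpos i j hj.symm) (hrow i)

theorem arf_mult_five_mod_zero_first_general (S : Set ℕ) (s : ℕ)
    (hs : 5 < s) (hmod : s % 5 = 0)
    (hS : S = (AddSubmonoid.closure ({5, s - 2, s + 1, s + 2, s + 4} : Set ℕ) : Set ℕ)) :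
    pseudoFrobeniusSet S = {s - 7, s - 4, s - 3, s - 1} ∧
    (∀ A : Matrix (Fin 5) (Fin 5) ℤ,
      IsRFMatrix ![5, s - 2, s + 1, s + 2, s + 4] ((s : ℤ) - 7) A ↔
        A = !![-1, 1, 0, 0, 0;
               ((s : ℤ) - 10) / 5, -1, 1, 0, 0;
               ((s : ℤ) - 10) / 5, 0, -1, 0, 1;
               (2 * (s : ℤ) - 5) / 5, 0, 0, -1, 0;
               ((s : ℤ) - 5) / 5, 0, 0, 1, -1]) := by
  rw [hS, coe_closure_eq_setOf hs hmod]
  exact ⟨pseudoFrobeniusSet_setOf hs hmod, isRFMatrix_iff_eq_rfMatrix hs hmod⟩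

/-- Arf numerical semigroup with multiplicity `5`, conductor `s > 5`,
`s ≡ 0 (mod 5)`, of the form `S = ⟨5, s-2, s+1, s+2, s+4⟩`: then
`PF(S) = {s-7, s-4, s-3, s-1}` and the unique RF-matrix of `s-7` is as displayed. -/
theorem arf_mult_five_mod_zero_first (S : Set ℕ) (s : ℕ)
    (hNS : IsNumericalSemigroup S) (hArf : IsArf S)
    (hmul : HasMultiplicity S 5) (hcon : HasConductor S s)
    (hs : 5 < s) (hmod : s % 5 = 0)
    (hS : S = (AddSubmonoid.closure ({5, s - 2, s + 1, s + 2, s + 4} : Set ℕ) : Set ℕ)) :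
    pseudoFrobeniusSet S = {s - 7, s - 4, s - 3, s - 1} ∧
    (∀ A : Matrix (Fin 5) (Fin 5) ℤ,
      IsRFMatrix ![5, s - 2, s + 1, s + 2, s + 4] ((s : ℤ) - 7) A ↔
        A = !![-1, 1, 0, 0, 0;
               ((s : ℤ) - 10) / 5, -1, 1, 0, 0;
               ((s : ℤ) - 10) / 5, 0, -1, 0, 1;
               (2 * (s : ℤ) - 5) / 5, 0, 0, -1, 0;
               ((s : ℤ) - 5) / 5, 0, 0, 1, -1]) :=
  arf_mult_five_mod_zero_first_general S s hs hmod hS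
end

section
/- Let S be an Arf numerical semigroup with multiplicity 5 and conductor s ≥ 5 with s ≡ 0 (mod 5), of the form S = ⟨5, s+1, s+2, s+3, s+4⟩. Then PF(S) = {s−4, s−3, s−2, s−1}; the unique RF-matrix of s−4 is the 5×5 matrix with rows (−1, 1, 0, 0, 0), ((s−5)/5, −1, 1, 0, 0), ((s−5)/5, 0, −1, 1, 0), ((s−5)/5, 0, 0, −1, 1), (2s/5, 0, 0, 0, −1); and the unique RF-matrix of s−3 is the matrix with rows (−1, 0, 1, 0, 0), ((s−5)/5, −1, 0, 1, 0), ((s−5)/5, 0, −1, 0, 1), (2s/5, 0, 0, −1, 0), (s/5, 1, 0, 0, −1). -/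
def multiplesOrGe (m s : ℕ) : AddSubmonoid ℕ where
  carrier := {n | m ∣ n ∨ s ≤ n}
  add_mem' := by
    rintro a b (ha | ha) (hb | hb)
    · exact Or.inl (dvd_add ha hb)
    all_goals exact Or.inr (by omega)
  zero_mem' := Or.inl (dvd_zero m)

theorem mem_multiplesOrGe {m s n : ℕ} : n ∈ multiplesOrGe m s ↔ m ∣ n ∨ s ≤ n := Iff.rfl

theorem closure_eq_multiplesOrGe {m s : ℕ} (hm : 0 < m) (hms : m ∣ s) :
    AddSubmonoid.closure (insert m ((s + ·) '' Set.Ioo 0 m)) = multiplesOrGe m s := by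
  set T := AddSubmonoid.closure (insert m ((s + ·) '' Set.Ioo 0 m))
  have hmul : ∀ k, m * k ∈ T := fun k =>
    mul_comm k m ▸ nsmul_mem (AddSubmonoid.subset_closure (Set.mem_insert m _)) k
  apply le_antisymm
  · rw [AddSubmonoid.closure_le]
    rintro _ (rfl | ⟨r, -, rfl⟩)
    · exact Or.inl dvd_rfl
    · exact Or.inr (Nat.le_add_right s r)
  · rintro n (⟨k, rfl⟩ | hsn)
    · exact hmul k
    by_cases hmn : m ∣ n
    · obtain ⟨k, rfl⟩ := hmn
      exact hmul k
    set r := (n - s) % m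
    have hr : r ∈ Set.Ioo 0 m := by
      refine ⟨Nat.pos_of_ne_zero fun hr0 => hmn ?_, Nat.mod_lt _ hm⟩
      have : n = s + (n - s) := by omega
      exact this ▸ dvd_add hms (Nat.dvd_of_mod_eq_zero hr0)
    have hn : n = (s + r) + m * ((n - s) / m) := by
      have := Nat.mod_add_div (n - s) m
      omega
    rw [hn]
    exact add_mem (AddSubmonoid.subset_closure (Set.mem_insert_of_mem _ ⟨r, hr, rfl⟩)) (hmul _)

theorem pseudoFrobeniusSet_multiplesOrGe {m s : ℕ} (hm : 0 < m) (hms : m ∣ s) :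
    pseudoFrobeniusSet (multiplesOrGe m s) = Set.Ioo (s - m) s := by
  ext z
  simp only [pseudoFrobeniusSet, SetLike.mem_coe, mem_multiplesOrGe, Set.mem_ofPred_eq,
    Set.mem_Ioo, not_or, not_le]
  obtain ⟨k, rfl⟩ := hms
  have hsub : m * k - m = m * (k - 1) := (Nat.mul_sub_one m k).symm
  constructor
  · rintro ⟨⟨hmz, hz⟩, hPF⟩
    rcases hPF m (Or.inl dvd_rfl) hm.ne' with h | h
    · exact absurd ((Nat.dvd_add_left dvd_rfl).mp h) hmz
    · have : z ≠ m * (k - 1) := fun h => hmz (h ▸ dvd_mul_right m _)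
      exact ⟨by omega, hz⟩
  · rintro ⟨hlo, hz⟩
    have hk : k - 1 + 1 = k :=
      Nat.sub_add_cancel (Nat.pos_of_mul_pos_left (by omega : 0 < m * k))
    refine ⟨⟨Nat.not_dvd_of_lt_of_lt_mul_succ (k := k - 1) (by omega) (by rwa [hk]), hz⟩, ?_⟩
    rintro n (hn | hn) hn0
    · have := Nat.le_of_dvd (Nat.pos_of_ne_zero hn0) hn
      exact Or.inr (by omega)
    · exact Or.inr (by omega)

def factorizations {e : ℕ} (n : Fin e → ℕ) (x : ℤ) : Set (Fin e → ℤ) :=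
  {v | 0 ≤ v ∧ ∑ j, v j * n j = x}

section RFMatrix

variable {e : ℕ} {n : Fin e → ℕ} {f : ℤ} {A B : Matrix (Fin e) (Fin e) ℤ}

theorem IsRFMatrix.row_add_single_mem_factorizations (hA : IsRFMatrix n f A) (i : Fin e) :
    A i + Pi.single i 1 ∈ factorizations n (f + n i) := by
  obtain ⟨hdiag, hoff, hrow⟩ := hA
  refine ⟨fun j => ?_, ?_⟩
  · rcases eq_or_ne j i with rfl | hji
    · simp [hdiag]
    · simpa [hji] using hoff i j hji.symm
  · simp [add_mul, Finset.sum_add_distrib, Pi.single_apply, hrow i]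

theorem IsRFMatrix.eq_of_subsingleton (h : ∀ i, (factorizations n (f + n i)).Subsingleton)
    (hA : IsRFMatrix n f A) (hB : IsRFMatrix n f B) : A = B :=
  funext fun i => add_right_cancel <|
    h i (hA.row_add_single_mem_factorizations i) (hB.row_add_single_mem_factorizations i)

theorem isRFMatrix_iff_eq_of_subsingleton (h : ∀ i, (factorizations n (f + n i)).Subsingleton)
    (hB : IsRFMatrix n f B) : IsRFMatrix n f A ↔ A = B :=
  ⟨fun hA => hA.eq_of_subsingleton h hB, fun hAB => hAB ▸ hB⟩

end RFMatrix

theorem factorizations_subsingleton_of_lt {s : ℕ} (hs : 5 ∣ s) {x : ℤ} (hx : x < 2 * s + 2) :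
    (factorizations (![5, s + 1, s + 2, s + 3, s + 4] : Fin 5 → ℕ) x).Subsingleton := by
  obtain ⟨t, rfl⟩ := hs
  have shape :
      ∀ v ∈ factorizations (![5, 5 * t + 1, 5 * t + 2, 5 * t + 3, 5 * t + 4] : Fin 5 → ℕ) x,
      (∀ j, 0 ≤ v j) ∧ v 1 + v 2 + v 3 + v 4 ≤ 1 ∧
      5 * (v 0 + t * (v 1 + v 2 + v 3 + v 4)) + (v 1 + 2 * v 2 + 3 * v 3 + 4 * v 4) = x := by
    rintro v ⟨hv, hvx⟩
    replace hv : ∀ j, 0 ≤ v j := hv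
    simp only [Fin.sum_univ_five, Matrix.cons_val, Nat.cast_add, Nat.cast_mul, Nat.cast_ofNat,
      Nat.cast_one] at hvx
    have hvx' :
        5 * (v 0 + t * (v 1 + v 2 + v 3 + v 4)) + (v 1 + 2 * v 2 + 3 * v 3 + 4 * v 4) = x := by
      linear_combination hvx
    refine ⟨hv, ?_, hvx'⟩
    push_cast at hx
    by_contra! h2
    linarith [hv 0, hv 1, hv 2, hv 3, hv 4,
      mul_le_mul_of_nonneg_left (show (2:ℤ) ≤ _ from h2) (Int.natCast_nonneg t)]
  rintro v hv w hw
  obtain ⟨hv0, hv1, hvx⟩ := shape v hv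
  obtain ⟨hw0, hw1, hwx⟩ := shape w hw
  have := hv0 1; have := hv0 2; have := hv0 3; have := hv0 4
  have := hw0 1; have := hw0 2; have := hw0 3; have := hw0 4
  -- both weighted sums are the residue of `x` mod 5, since they lie in `[0, 4]`
  have hq : v 1 + 2 * v 2 + 3 * v 3 + 4 * v 4 = w 1 + 2 * w 2 + 3 * w 3 + 4 * w 4 := by omega
  have h4 : v 4 = w 4 := by omega
  have h3 : v 3 = w 3 := by omega
  have h2 : v 2 = w 2 := by omega
  have h1 : v 1 = w 1 := by omega
  have h0 : v 0 = w 0 := by rw [h1, h2, h3, h4] at hvx; omega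
  funext j
  fin_cases j <;> assumption

theorem factorizations_add_generator_subsingleton {s : ℕ} (hs : 0 < s) (h5 : 5 ∣ s) {f : ℤ}
    (hf : f ≤ s - 3) (i : Fin 5) :
    (factorizations ![5, s + 1, s + 2, s + 3, s + 4]
      (f + ![5, s + 1, s + 2, s + 3, s + 4] i)).Subsingleton :=
  factorizations_subsingleton_of_lt h5 <| by
    fin_cases i <;>
      simp only [Fin.zero_eta, Fin.mk_one, Fin.reduceFinMk, Matrix.cons_val, Nat.cast_add,
        Nat.cast_ofNat, Nat.cast_one] <;>
      omega

theorem isRFMatrix_sub_four {s : ℕ} (hs : 5 ≤ s) (h5 : 5 ∣ s) :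
    IsRFMatrix ![5, s + 1, s + 2, s + 3, s + 4] ((s : ℤ) - 4)
      !![-1, 1, 0, 0, 0;
         ((s : ℤ) - 5) / 5, -1, 1, 0, 0;
         ((s : ℤ) - 5) / 5, 0, -1, 1, 0;
         ((s : ℤ) - 5) / 5, 0, 0, -1, 1;
         2 * (s : ℤ) / 5, 0, 0, 0, -1] := by
  refine ⟨fun i => by fin_cases i <;> rfl, fun i j hij => ?_, fun i => ?_⟩
  · have : 0 ≤ ((s : ℤ) - 5) / 5 ∧ 0 ≤ 2 * (s : ℤ) / 5 := by omega
    fin_cases i <;> fin_cases j <;> simp_all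
  · fin_cases i <;>
      simp only [Fin.sum_univ_five, Matrix.of_apply, Matrix.cons_val, Fin.zero_eta, Fin.mk_one,
        Fin.reduceFinMk, Nat.cast_add, Nat.cast_ofNat, Nat.cast_one] <;>
      omega

theorem isRFMatrix_sub_three {s : ℕ} (hs : 5 ≤ s) (h5 : 5 ∣ s) :
    IsRFMatrix ![5, s + 1, s + 2, s + 3, s + 4] ((s : ℤ) - 3)
      !![-1, 0, 1, 0, 0;
         ((s : ℤ) - 5) / 5, -1, 0, 1, 0;
         ((s : ℤ) - 5) / 5, 0, -1, 0, 1;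
         2 * (s : ℤ) / 5, 0, 0, -1, 0;
         (s : ℤ) / 5, 1, 0, 0, -1] := by
  refine ⟨fun i => by fin_cases i <;> rfl, fun i j hij => ?_, fun i => ?_⟩
  · have : 0 ≤ ((s : ℤ) - 5) / 5 ∧ 0 ≤ 2 * (s : ℤ) / 5 ∧ 0 ≤ (s : ℤ) / 5 := by omega
    fin_cases i <;> fin_cases j <;> simp_all
  · fin_cases i <;>
      simp only [Fin.sum_univ_five, Matrix.of_apply, Matrix.cons_val, Fin.zero_eta, Fin.mk_one,
        Fin.reduceFinMk, Nat.cast_add, Nat.cast_ofNat, Nat.cast_one] <;>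
      omega

theorem arf_mult_five_mod_zero_second_general (S : Set ℕ) (s : ℕ)
    (hs : 5 ≤ s) (hmod : s % 5 = 0)
    (hS : S = (AddSubmonoid.closure ({5, s + 1, s + 2, s + 3, s + 4} : Set ℕ) : Set ℕ)) :
    pseudoFrobeniusSet S = {s - 4, s - 3, s - 2, s - 1} ∧
    (∀ A : Matrix (Fin 5) (Fin 5) ℤ,
      IsRFMatrix ![5, s + 1, s + 2, s + 3, s + 4] ((s : ℤ) - 4) A ↔
        A = !![-1, 1, 0, 0, 0;
               ((s : ℤ) - 5) / 5, -1, 1, 0, 0;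
               ((s : ℤ) - 5) / 5, 0, -1, 1, 0;
               ((s : ℤ) - 5) / 5, 0, 0, -1, 1;
               2 * (s : ℤ) / 5, 0, 0, 0, -1]) ∧
    (∀ A : Matrix (Fin 5) (Fin 5) ℤ,
      IsRFMatrix ![5, s + 1, s + 2, s + 3, s + 4] ((s : ℤ) - 3) A ↔
        A = !![-1, 0, 1, 0, 0;
               ((s : ℤ) - 5) / 5, -1, 0, 1, 0;
               ((s : ℤ) - 5) / 5, 0, -1, 0, 1;
               2 * (s : ℤ) / 5, 0, 0, -1, 0;
               (s : ℤ) / 5, 1, 0, 0, -1]) := by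
  have h5 : 5 ∣ s := Nat.dvd_of_mod_eq_zero hmod
  have hgens :
      ({5, s + 1, s + 2, s + 3, s + 4} : Set ℕ) = insert 5 ((s + ·) '' Set.Ioo 0 5) := by
    have hIoo : Set.Ioo 0 5 = {1, 2, 3, 4} := by
      ext
      simp only [Set.mem_Ioo, Set.mem_insert_iff, Set.mem_singleton_iff]
      omega
    simp [hIoo, Set.image_insert_eq]
  have hunique (f : ℤ) (hf : f ≤ s - 3) :=
    factorizations_add_generator_subsingleton (by omega) h5 hf
  refine ⟨?_,
    fun A => isRFMatrix_iff_eq_of_subsingleton (hunique _ (by omega)) (isRFMatrix_sub_four hs h5),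
    fun A => isRFMatrix_iff_eq_of_subsingleton (hunique _ le_rfl) (isRFMatrix_sub_three hs h5)⟩
  rw [hS, hgens, closure_eq_multiplesOrGe (by norm_num) h5,
    pseudoFrobeniusSet_multiplesOrGe (by norm_num) h5]
  ext z
  simp only [Set.mem_Ioo, Set.mem_insert_iff, Set.mem_singleton_iff]
  omega

/-- Arf numerical semigroup with multiplicity `5`, conductor `s ≥ 5`,
`s ≡ 0 (mod 5)`, of the form `S = ⟨5, s+1, s+2, s+3, s+4⟩`: then
`PF(S) = {s-4, s-3, s-2, s-1}` and the unique RF-matrices of `s-4` and `s-3`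
are as displayed. -/
theorem arf_mult_five_mod_zero_second (S : Set ℕ) (s : ℕ)
    (hNS : IsNumericalSemigroup S) (hArf : IsArf S)
    (hmul : HasMultiplicity S 5) (hcon : HasConductor S s)
    (hs : 5 ≤ s) (hmod : s % 5 = 0)
    (hS : S = (AddSubmonoid.closure ({5, s + 1, s + 2, s + 3, s + 4} : Set ℕ) : Set ℕ)) :
    pseudoFrobeniusSet S = {s - 4, s - 3, s - 2, s - 1} ∧
    (∀ A : Matrix (Fin 5) (Fin 5) ℤ,
      IsRFMatrix ![5, s + 1, s + 2, s + 3, s + 4] ((s : ℤ) - 4) A ↔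
        A = !![-1, 1, 0, 0, 0;
               ((s : ℤ) - 5) / 5, -1, 1, 0, 0;
               ((s : ℤ) - 5) / 5, 0, -1, 1, 0;
               ((s : ℤ) - 5) / 5, 0, 0, -1, 1;
               2 * (s : ℤ) / 5, 0, 0, 0, -1]) ∧
    (∀ A : Matrix (Fin 5) (Fin 5) ℤ,
      IsRFMatrix ![5, s + 1, s + 2, s + 3, s + 4] ((s : ℤ) - 3) A ↔
        A = !![-1, 0, 1, 0, 0;
               ((s : ℤ) - 5) / 5, -1, 0, 1, 0;
               ((s : ℤ) - 5) / 5, 0, -1, 0, 1;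
               2 * (s : ℤ) / 5, 0, 0, -1, 0;
               (s : ℤ) / 5, 1, 0, 0, -1]) :=
  arf_mult_five_mod_zero_second_general S s hs hmod hS
end

section
/- Let S be an Arf numerical semigroup with multiplicity 5 and conductor s > 5 with s ≡ 4 (mod 5), of the form S = ⟨5, s−2, s, s+2, s+4⟩. Then PF(S) = {s−7, s−5, s−3, s−1}; the unique RF-matrix of s−7 is the 5×5 matrix with rows (−1, 1, 0, 0, 0), ((s−9)/5, −1, 1, 0, 0), ((s−9)/5, 0, −1, 1, 0), ((s−9)/5, 0, 0, −1, 1), ((2s−3)/5, 0, 0, 0, −1); and the unique RF-matrix of s−5 is the matrix with rows (−1, 0, 1, 0, 0), ((s−9)/5, −1, 0, 1, 0), ((s−9)/5, 0, −1, 0, 1), ((2s−3)/5, 0, 0, −1, 0), ((s+1)/5, 1, 0, 0, −1). -/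
/-! Since `s ≡ 4 (mod 5)`, the generators `s - 2, s, s + 2, s + 4` represent the nonzero
residues mod `5`, so `S` consists of the multiples of `5`, the element `s - 2` and all `n ≥ s`;
the pseudo-Frobenius numbers are read off from this description. Row `i` of an RF-matrix of `f`
is a factorization of `f + nᵢ` not involving `nᵢ`. For `f ∈ {s - 7, s - 5}` we have
`f + nᵢ < 3(s - 2)`, so at most two generators other than `5` occur, and then size and residue
mod `5` leave a single factorization. -/

theorem mem_closure_iff_of_mod_five_eq_four {s n : ℕ} (hs : 5 < s) (hmod : s % 5 = 4) :
    n ∈ AddSubmonoid.closure ({5, s - 2, s, s + 2, s + 4} : Set ℕ) ↔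
      n % 5 = 0 ∨ n = s - 2 ∨ s ≤ n := by
  set gens : Set ℕ := {5, s - 2, s, s + 2, s + 4}
  constructor
  · intro hn
    induction hn using AddSubmonoid.closure_induction with
    | mem x hx =>
      simp only [gens, Set.mem_insert_iff, Set.mem_singleton_iff] at hx
      omega
    | zero => omega
    | add a b _ _ ha hb => omega
  · have h5 : ∀ j, 5 * j ∈ AddSubmonoid.closure gens := fun j => by
      simpa [mul_comm] using
        nsmul_mem (AddSubmonoid.subset_closure (show 5 ∈ gens by simp [gens])) j
    have hshift : ∀ g ∈ gens, ∀ j, g + 5 * j ∈ AddSubmonoid.closure gens := fun g hg j =>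
      add_mem (AddSubmonoid.subset_closure hg) (h5 j)
    intro h
    obtain h' | h' | h' | h' | h' :
        n % 5 = 0 ∨ n % 5 = 1 ∨ n % 5 = 2 ∨ n % 5 = 3 ∨ n % 5 = 4 := by
      omega
    · rw [← Nat.mul_div_cancel' (Nat.dvd_of_mod_eq_zero h')]
      exact h5 _
    · convert hshift (s + 2) (by simp [gens]) ((n - (s + 2)) / 5) using 1
      omega
    · convert hshift (s - 2) (by simp [gens]) ((n - (s - 2)) / 5) using 1
      omega
    · convert hshift (s + 4) (by simp [gens]) ((n - (s + 4)) / 5) using 1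
      omega
    · convert hshift s (by simp [gens]) ((n - s) / 5) using 1
      omega

theorem pseudoFrobeniusSet_eq_of_mem_iff {S : Set ℕ} {s : ℕ} (hs : 5 < s) (hmod : s % 5 = 4)
    (hS : ∀ n, n ∈ S ↔ n % 5 = 0 ∨ n = s - 2 ∨ s ≤ n) :
    pseudoFrobeniusSet S = {s - 7, s - 5, s - 3, s - 1} := by
  ext z
  simp only [pseudoFrobeniusSet, Set.mem_ofPred_eq, Set.mem_insert_iff, Set.mem_singleton_iff, hS]
  constructor
  · rintro ⟨hz, hz5⟩
    have := hz5 5 (by omega) (by omega)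
    omega
  · exact fun hz => ⟨by omega, fun n hn hn0 => by omega⟩

theorem factorization_cases_of_lt {s : ℕ} {N : ℤ} (hs : 2 ≤ s) {c : Fin 5 → ℤ}
    (hc : ∀ j, 0 ≤ c j) (h : ∑ j, c j * (![5, s - 2, s, s + 2, s + 4] j : ℤ) = N)
    (hN : N < 3 * (s - 2)) :
    (c 1 = 0 ∧ c 2 = 0 ∧ c 3 = 0 ∧ c 4 = 0 ∧ 5 * c 0 = N) ∨
    (c 1 = 1 ∧ c 2 = 0 ∧ c 3 = 0 ∧ c 4 = 0 ∧ 5 * c 0 + s - 2 = N) ∨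
    (c 1 = 0 ∧ c 2 = 1 ∧ c 3 = 0 ∧ c 4 = 0 ∧ 5 * c 0 + s = N) ∨
    (c 1 = 0 ∧ c 2 = 0 ∧ c 3 = 1 ∧ c 4 = 0 ∧ 5 * c 0 + s + 2 = N) ∨
    (c 1 = 0 ∧ c 2 = 0 ∧ c 3 = 0 ∧ c 4 = 1 ∧ 5 * c 0 + s + 4 = N) ∨
    (c 1 + c 2 + c 3 + c 4 = 2 ∧ 5 * c 0 + 2 * s - 2 * c 1 + 2 * c 3 + 4 * c 4 = N) := by
  have h₀ := hc 0; have h₁ := hc 1; have h₂ := hc 2; have h₃ := hc 3; have h₄ := hc 4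
  simp only [Fin.sum_univ_five, Matrix.cons_val,
    Nat.cast_ofNat, Nat.cast_add, Nat.cast_sub hs] at h
  have hlin : 5 * c 0 + (c 1 + c 2 + c 3 + c 4) * s - 2 * c 1 + 2 * c 3 + 4 * c 4 = N := by
    linear_combination h
  have hT : c 1 + c 2 + c 3 + c 4 ≤ 2 := by
    by_contra! hT
    nlinarith [mul_nonneg (by linarith : (0 : ℤ) ≤ c 1 + c 2 + c 3 + c 4 - 3)
      (by omega : (0 : ℤ) ≤ s - 2)]
  obtain hT | hT | hT : c 1 + c 2 + c 3 + c 4 = 0 ∨ c 1 + c 2 + c 3 + c 4 = 1 ∨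
      c 1 + c 2 + c 3 + c 4 = 2 := by
    omega
  all_goals rw [hT] at hlin; omega

def IsRFRow {e : ℕ} (n : Fin e → ℕ) (f : ℤ) (i : Fin e) (r : Fin e → ℤ) : Prop :=
  r i = -1 ∧ (∀ j, i ≠ j → 0 ≤ r j) ∧ f = ∑ j, r j * (n j : ℤ)

section IsRFRow

variable {e : ℕ} {n : Fin e → ℕ} {f : ℤ}

theorem isRFMatrix_iff_forall_isRFRow {A : Matrix (Fin e) (Fin e) ℤ} :
    IsRFMatrix n f A ↔ ∀ i, IsRFRow n f i (A i) := by
  simp only [IsRFMatrix, IsRFRow, forall_and]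

theorem isRFMatrix_iff_eq {M : Matrix (Fin e) (Fin e) ℤ} (hM : IsRFMatrix n f M)
    (huniq : ∀ i r, IsRFRow n f i r → r = M i) (A : Matrix (Fin e) (Fin e) ℤ) :
    IsRFMatrix n f A ↔ A = M := by
  rw [isRFMatrix_iff_forall_isRFRow]
  exact ⟨fun hA => funext fun i => huniq i _ (hA i),
    fun hA => hA ▸ isRFMatrix_iff_forall_isRFRow.1 hM⟩

theorem IsRFRow.add_single {i : Fin e} {r : Fin e → ℤ} (h : IsRFRow n f i r) :
    (∀ j, 0 ≤ (r + Pi.single i 1 : Fin e → ℤ) j) ∧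
      ∑ j, (r + Pi.single i 1 : Fin e → ℤ) j * (n j : ℤ) = f + n i := by
  obtain ⟨hd, hnn, hf⟩ := h
  refine ⟨fun j => ?_, ?_⟩
  · rcases eq_or_ne i j with rfl | hij
    · simp [hd]
    · simpa [hij.symm] using hnn j hij
  · simp [add_mul, Finset.sum_add_distrib, Pi.single_apply, hf]

end IsRFRow

def rfMatrixSubSeven (s : ℕ) : Matrix (Fin 5) (Fin 5) ℤ :=
  !![-1, 1, 0, 0, 0;
     ((s : ℤ) - 9) / 5, -1, 1, 0, 0;
     ((s : ℤ) - 9) / 5, 0, -1, 1, 0;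
     ((s : ℤ) - 9) / 5, 0, 0, -1, 1;
     (2 * (s : ℤ) - 3) / 5, 0, 0, 0, -1]

def rfMatrixSubFive (s : ℕ) : Matrix (Fin 5) (Fin 5) ℤ :=
  !![-1, 0, 1, 0, 0;
     ((s : ℤ) - 9) / 5, -1, 0, 1, 0;
     ((s : ℤ) - 9) / 5, 0, -1, 0, 1;
     (2 * (s : ℤ) - 3) / 5, 0, 0, -1, 0;
     ((s : ℤ) + 1) / 5, 1, 0, 0, -1]

theorem isRFMatrix_rfMatrixSubSeven {s : ℕ} (hs : 5 < s) (hmod : s % 5 = 4) :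
    IsRFMatrix ![5, s - 2, s, s + 2, s + 4] ((s : ℤ) - 7) (rfMatrixSubSeven s) := by
  refine ⟨fun i => ?_, fun i j hij => ?_, fun i => ?_⟩
  · fin_cases i <;> rfl
  · fin_cases i <;> fin_cases j <;>
      simp only [rfMatrixSubSeven, Matrix.of_apply, Matrix.cons_val, Fin.zero_eta, Fin.mk_one,
        Fin.reduceFinMk, Fin.isValue, ne_eq, not_true_eq_false] at hij ⊢ <;>
      omega
  · fin_cases i <;>
      simp only [rfMatrixSubSeven, Matrix.of_apply, Matrix.cons_val, Fin.zero_eta, Fin.mk_one,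
        Fin.reduceFinMk, Fin.isValue, Fin.sum_univ_five, Nat.cast_add, Nat.cast_ofNat] <;>
      omega

theorem isRFMatrix_rfMatrixSubFive {s : ℕ} (hs : 5 < s) (hmod : s % 5 = 4) :
    IsRFMatrix ![5, s - 2, s, s + 2, s + 4] ((s : ℤ) - 5) (rfMatrixSubFive s) := by
  refine ⟨fun i => ?_, fun i j hij => ?_, fun i => ?_⟩
  · fin_cases i <;> rfl
  · fin_cases i <;> fin_cases j <;>
      simp only [rfMatrixSubFive, Matrix.of_apply, Matrix.cons_val, Fin.zero_eta, Fin.mk_one,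
        Fin.reduceFinMk, Fin.isValue, ne_eq, not_true_eq_false] at hij ⊢ <;>
      omega
  · fin_cases i <;>
      simp only [rfMatrixSubFive, Matrix.of_apply, Matrix.cons_val, Fin.zero_eta, Fin.mk_one,
        Fin.reduceFinMk, Fin.isValue, Fin.sum_univ_five, Nat.cast_add, Nat.cast_ofNat] <;>
      omega

theorem IsRFRow.eq_rfMatrixSubSeven {s : ℕ} (hs : 5 < s) (hmod : s % 5 = 4) {i : Fin 5}
    {r : Fin 5 → ℤ} (hr : IsRFRow ![5, s - 2, s, s + 2, s + 4] ((s : ℤ) - 7) i r) :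
    r = rfMatrixSubSeven s i := by
  obtain ⟨hc, hsum⟩ := hr.add_single
  have hcases := factorization_cases_of_lt (by omega) hc hsum <| by
    fin_cases i <;>
      simp only [Matrix.cons_val, Fin.zero_eta, Fin.mk_one, Fin.reduceFinMk, Fin.isValue,
        Nat.cast_add, Nat.cast_ofNat] <;>
      omega
  have hd := hr.1
  have hc0 := hc 0; have hc1 := hc 1; have hc2 := hc 2; have hc3 := hc 3; have hc4 := hc 4
  fin_cases i <;>
    simp only [Matrix.cons_val, Fin.zero_eta, Fin.mk_one, Fin.reduceFinMk, Fin.isValue,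
      Pi.add_apply, Pi.single_apply, Fin.reduceEq, ↓reduceIte, add_zero]
      at hcases hd hc0 hc1 hc2 hc3 hc4 <;>
    funext j <;> fin_cases j <;>
    simp only [rfMatrixSubSeven, Matrix.of_apply, Matrix.cons_val, Fin.zero_eta, Fin.mk_one,
      Fin.reduceFinMk, Fin.isValue] <;>
    omega

theorem IsRFRow.eq_rfMatrixSubFive {s : ℕ} (hs : 5 < s) (hmod : s % 5 = 4) {i : Fin 5}
    {r : Fin 5 → ℤ} (hr : IsRFRow ![5, s - 2, s, s + 2, s + 4] ((s : ℤ) - 5) i r) :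
    r = rfMatrixSubFive s i := by
  obtain ⟨hc, hsum⟩ := hr.add_single
  have hcases := factorization_cases_of_lt (by omega) hc hsum <| by
    fin_cases i <;>
      simp only [Matrix.cons_val, Fin.zero_eta, Fin.mk_one, Fin.reduceFinMk, Fin.isValue,
        Nat.cast_add, Nat.cast_ofNat] <;>
      omega
  have hd := hr.1
  have hc0 := hc 0; have hc1 := hc 1; have hc2 := hc 2; have hc3 := hc 3; have hc4 := hc 4
  fin_cases i <;>
    simp only [Matrix.cons_val, Fin.zero_eta, Fin.mk_one, Fin.reduceFinMk, Fin.isValue,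
      Pi.add_apply, Pi.single_apply, Fin.reduceEq, ↓reduceIte, add_zero]
      at hcases hd hc0 hc1 hc2 hc3 hc4 <;>
    funext j <;> fin_cases j <;>
    simp only [rfMatrixSubFive, Matrix.of_apply, Matrix.cons_val, Fin.zero_eta, Fin.mk_one,
      Fin.reduceFinMk, Fin.isValue] <;>
    omega

theorem arf_mult_five_mod_four_first_general (S : Set ℕ) (s : ℕ)
    (hs : 5 < s) (hmod : s % 5 = 4)
    (hS : S = (AddSubmonoid.closure ({5, s - 2, s, s + 2, s + 4} : Set ℕ) : Set ℕ)) :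
    pseudoFrobeniusSet S = {s - 7, s - 5, s - 3, s - 1} ∧
    (∀ A : Matrix (Fin 5) (Fin 5) ℤ,
      IsRFMatrix ![5, s - 2, s, s + 2, s + 4] ((s : ℤ) - 7) A ↔
        A = !![-1, 1, 0, 0, 0;
               ((s : ℤ) - 9) / 5, -1, 1, 0, 0;
               ((s : ℤ) - 9) / 5, 0, -1, 1, 0;
               ((s : ℤ) - 9) / 5, 0, 0, -1, 1;
               (2 * (s : ℤ) - 3) / 5, 0, 0, 0, -1]) ∧
    (∀ A : Matrix (Fin 5) (Fin 5) ℤ,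
      IsRFMatrix ![5, s - 2, s, s + 2, s + 4] ((s : ℤ) - 5) A ↔
        A = !![-1, 0, 1, 0, 0;
               ((s : ℤ) - 9) / 5, -1, 0, 1, 0;
               ((s : ℤ) - 9) / 5, 0, -1, 0, 1;
               (2 * (s : ℤ) - 3) / 5, 0, 0, -1, 0;
               ((s : ℤ) + 1) / 5, 1, 0, 0, -1]) := by
  refine ⟨pseudoFrobeniusSet_eq_of_mem_iff hs hmod fun n => ?_,
    isRFMatrix_iff_eq (isRFMatrix_rfMatrixSubSeven hs hmod)
      fun _ _ hr => hr.eq_rfMatrixSubSeven hs hmod,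
    isRFMatrix_iff_eq (isRFMatrix_rfMatrixSubFive hs hmod)
      fun _ _ hr => hr.eq_rfMatrixSubFive hs hmod⟩
  rw [hS, SetLike.mem_coe]
  exact mem_closure_iff_of_mod_five_eq_four hs hmod

/-- Arf numerical semigroup with multiplicity `5`, conductor `s > 5`,
`s ≡ 4 (mod 5)`, of the form `S = ⟨5, s-2, s, s+2, s+4⟩`: then
`PF(S) = {s-7, s-5, s-3, s-1}` and the unique RF-matrices of `s-7` and `s-5`
are as displayed. -/
theorem arf_mult_five_mod_four_first (S : Set ℕ) (s : ℕ)
    (hNS : IsNumericalSemigroup S) (hArf : IsArf S)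
    (hmul : HasMultiplicity S 5) (hcon : HasConductor S s)
    (hs : 5 < s) (hmod : s % 5 = 4)
    (hS : S = (AddSubmonoid.closure ({5, s - 2, s, s + 2, s + 4} : Set ℕ) : Set ℕ)) :
    pseudoFrobeniusSet S = {s - 7, s - 5, s - 3, s - 1} ∧
    (∀ A : Matrix (Fin 5) (Fin 5) ℤ,
      IsRFMatrix ![5, s - 2, s, s + 2, s + 4] ((s : ℤ) - 7) A ↔
        A = !![-1, 1, 0, 0, 0;
               ((s : ℤ) - 9) / 5, -1, 1, 0, 0;
               ((s : ℤ) - 9) / 5, 0, -1, 1, 0;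
               ((s : ℤ) - 9) / 5, 0, 0, -1, 1;
               (2 * (s : ℤ) - 3) / 5, 0, 0, 0, -1]) ∧
    (∀ A : Matrix (Fin 5) (Fin 5) ℤ,
      IsRFMatrix ![5, s - 2, s, s + 2, s + 4] ((s : ℤ) - 5) A ↔
        A = !![-1, 0, 1, 0, 0;
               ((s : ℤ) - 9) / 5, -1, 0, 1, 0;
               ((s : ℤ) - 9) / 5, 0, -1, 0, 1;
               (2 * (s : ℤ) - 3) / 5, 0, 0, -1, 0;
               ((s : ℤ) + 1) / 5, 1, 0, 0, -1]) :=
  arf_mult_five_mod_four_first_general S s hs hmod hS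
end

section
/- Let S = ⟨m, s+1, s+2, …, s+m−1⟩ be an Arf numerical semigroup with multiplicity m and conductor s, where s ≡ 0 (mod m). Then PF(S) = {s−m+1, s−m+2, …, s−1}, and for each k ∈ {1, …, m−1}, the m×m integer matrix (a_ij) defined (with generators indexed n₁ = m and n_j = s+j−1 for 2 ≤ j ≤ m) by a_ij = −1 if i = j; a_ij = 1 if i = 1 and j = m−k+1; a_ij = 2s/m if i = k+1 and j = 1; a_ij = (s−m)/m if 1 < i < k+1 and j = 1; a_ij = 1 if 1 < i < k+1 and j = i+m−k; a_ij = s/m if i > k+1 and j = 1; a_ij = 1 if i > k+1 and j = i−k; and a_ij = 0 otherwise, is an RF-matrix of the pseudo-Frobenius number s−k. -/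
/-- The generating set `{m, s+1, s+2, …, s+m-1}`. -/
def arfGenSet (m s : ℕ) : Set ℕ :=
  insert m ((fun i => s + i) '' Set.Icc 1 (m - 1))

/-!
Since `m ∣ s`, the semigroup `⟨m, s+1, …, s+m-1⟩` is `mℕ ∪ [s, ∞)`: an element `n ≥ s` with
`n ≢ 0 (mod m)` is the generator `s + n % m` plus a multiple of `m`. A gap `z < s` is then
pseudo-Frobenius iff `z + m ≥ s`, because `z + m` is again not a multiple of `m`; this leaves the
gaps strictly between `s - m` and `s`. Each row of the matrix has the shape
`-eᵢ + a • e₀ + e_c`, so its row sum is `-nᵢ + a m + n_c`, which is `s - k` since `m ∣ s`.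
-/

theorem mem_closure_arfGenSet_iff {m s n : ℕ} (hm : m ≠ 0) (hdvd : m ∣ s) :
    n ∈ AddSubmonoid.closure (arfGenSet m s) ↔ m ∣ n ∨ s ≤ n := by
  constructor
  · intro hn
    induction hn using AddSubmonoid.closure_induction with
    | mem x hx =>
      rcases hx with rfl | ⟨i, hi, rfl⟩
      · exact Or.inl dvd_rfl
      · exact Or.inr (Nat.le_add_right s i)
    | zero => exact Or.inl (dvd_zero m)
    | add a b _ _ iha ihb =>
      rcases iha with ha | ha
      · rcases ihb with hb | hb
        · exact Or.inl (dvd_add ha hb)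
        · exact Or.inr (le_add_left hb)
      · exact Or.inr (le_add_right ha)
  · have hmem_m : m ∈ AddSubmonoid.closure (arfGenSet m s) :=
      AddSubmonoid.subset_closure (Set.mem_insert m _)
    have hmul : ∀ t, m * t ∈ AddSubmonoid.closure (arfGenSet m s) := fun t => by
      simpa [smul_eq_mul, mul_comm] using AddSubmonoid.nsmul_mem _ hmem_m t
    rintro (⟨t, rfl⟩ | hsn)
    · exact hmul t
    · by_cases hdvdn : m ∣ n
      · obtain ⟨t, rfl⟩ := hdvdn
        exact hmul t
      obtain ⟨c, rfl⟩ := hdvd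
      have hr : n % m ≠ 0 := fun h => hdvdn (Nat.dvd_of_mod_eq_zero h)
      have hgen : m * c + n % m ∈ AddSubmonoid.closure (arfGenSet m (m * c)) :=
        AddSubmonoid.subset_closure (Set.mem_insert_of_mem _
          ⟨n % m, ⟨Nat.one_le_iff_ne_zero.2 hr, Nat.le_sub_one_of_lt (Nat.mod_lt n
            (Nat.pos_of_ne_zero hm))⟩, rfl⟩)
      have hn : n = (m * c + n % m) + m * (n / m - c) := by
        have hdiv : m * c ≤ m * (n / m) := Nat.mul_le_mul_left m
          ((Nat.le_div_iff_mul_le (Nat.pos_of_ne_zero hm)).2 (by linarith))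
        rw [Nat.mul_sub]
        have := Nat.mod_add_div n m
        omega
      rw [hn]
      exact add_mem hgen (hmul _)

theorem pseudoFrobeniusSet_setOf_dvd_or_le {m s : ℕ} (hm : m ≠ 0) (hdvd : m ∣ s) :
    pseudoFrobeniusSet {n | m ∣ n ∨ s ≤ n} = Set.Icc (s - m + 1) (s - 1) := by
  obtain ⟨c, rfl⟩ := hdvd
  ext z
  simp only [pseudoFrobeniusSet, Set.mem_ofPred_eq, Set.mem_Icc, not_or, not_le]
  constructor
  · rintro ⟨⟨hz, hzs⟩, hgap⟩
    have hzm : m * c ≤ z + m :=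
      (hgap m (Or.inl dvd_rfl) hm).resolve_left fun h => hz ((Nat.dvd_add_self_right).1 h)
    have hne : z ≠ m * c - m := by
      rintro rfl
      exact hz (Nat.dvd_sub (dvd_mul_right m c) dvd_rfl)
    omega
  · rintro ⟨hlo, hhi⟩
    refine ⟨⟨?_, by omega⟩, fun n hn hn0 => Or.inr ?_⟩
    · rintro ⟨t, rfl⟩
      have htc : t < c := Nat.lt_of_mul_lt_mul_left (a := m) (by omega)
      have hct : c - 1 < t := Nat.lt_of_mul_lt_mul_left (a := m) (by rw [Nat.mul_sub_one]; omega)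
      omega
    · rcases hn with hn | hn
      · have := Nat.le_of_dvd (Nat.pos_of_ne_zero hn0) hn
        omega
      · omega

-- Indices are shifted by one from the paper: generator `0` is `n₁ = m`, generator `j ≥ 1` is
-- `n_{j+1} = s + j`, and the matrix entry `(i, j)` is the paper's `a_{i+1, j+1}`.
def arfGenerators (m s : ℕ) : Fin m → ℕ :=
  fun j => if (j : ℕ) = 0 then m else s + (j : ℕ)

def arfRFMatrix (m s k : ℕ) : Matrix (Fin m) (Fin m) ℤ :=
  Matrix.of fun i j : Fin m =>
    if (i : ℕ) = (j : ℕ) then (-1 : ℤ)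
    else if (i : ℕ) = 0 ∧ (j : ℕ) + k = m then 1
    else if (i : ℕ) = k ∧ (j : ℕ) = 0 then 2 * (s : ℤ) / (m : ℤ)
    else if 0 < (i : ℕ) ∧ (i : ℕ) < k ∧ (j : ℕ) = 0 then
      ((s : ℤ) - (m : ℤ)) / (m : ℤ)
    else if 0 < (i : ℕ) ∧ (i : ℕ) < k ∧ (j : ℕ) + k = (i : ℕ) + m then 1
    else if k < (i : ℕ) ∧ (j : ℕ) = 0 then (s : ℤ) / (m : ℤ)
    else if k < (i : ℕ) ∧ (j : ℕ) + k = (i : ℕ) then 1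
    else 0

section RFMatrix

variable {m s k : ℕ}

theorem arfRFMatrix_row_zero (hk : k < m) (i c : Fin m) (hi : (i : ℕ) = 0)
    (hc : (c : ℕ) + k = m) : arfRFMatrix m s k i = -Pi.single i 1 + Pi.single c 1 := by
  ext j
  simp only [arfRFMatrix, Matrix.of_apply, Pi.add_apply, Pi.neg_apply, Pi.single_apply,
    Fin.ext_iff]
  split_ifs <;> omega

theorem arfRFMatrix_row_of_lt (i c : Fin m) (hi : 0 < (i : ℕ)) (hik : (i : ℕ) < k)
    (hk : k < m) (hc : (c : ℕ) + k = i + m) (z : Fin m) (hz : (z : ℕ) = 0) :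
    arfRFMatrix m s k i =
      -Pi.single i 1 + (((s : ℤ) - m) / m) • Pi.single z 1 + Pi.single c 1 := by
  ext j
  simp only [arfRFMatrix, Matrix.of_apply, Pi.add_apply, Pi.neg_apply, Pi.smul_apply,
    Pi.single_apply, Fin.ext_iff, smul_eq_mul]
  split_ifs <;> omega

theorem arfRFMatrix_row_self (i : Fin m) (hi : (i : ℕ) = k) (hk : 1 ≤ k) (z : Fin m)
    (hz : (z : ℕ) = 0) :
    arfRFMatrix m s k i = -Pi.single i 1 + (2 * (s : ℤ) / m) • Pi.single z 1 := by
  ext j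
  simp only [arfRFMatrix, Matrix.of_apply, Pi.add_apply, Pi.neg_apply, Pi.smul_apply,
    Pi.single_apply, Fin.ext_iff, smul_eq_mul]
  split_ifs <;> omega

theorem arfRFMatrix_row_of_gt (i c : Fin m) (hki : k < (i : ℕ)) (hk : 1 ≤ k)
    (hc : (c : ℕ) + k = i) (z : Fin m) (hz : (z : ℕ) = 0) :
    arfRFMatrix m s k i = -Pi.single i 1 + ((s : ℤ) / m) • Pi.single z 1 + Pi.single c 1 := by
  ext j
  simp only [arfRFMatrix, Matrix.of_apply, Pi.add_apply, Pi.neg_apply, Pi.smul_apply,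
    Pi.single_apply, Fin.ext_iff, smul_eq_mul]
  split_ifs <;> omega

theorem isRFMatrix_arfRFMatrix (hk : 1 ≤ k) (hkm : k < m) (hdvd : m ∣ s) (hms : m ≤ s) :
    IsRFMatrix (arfGenerators m s) ((s : ℤ) - k) (arfRFMatrix m s k) := by
  refine ⟨fun i => by simp [arfRFMatrix], fun i j hij => ?_, fun i => ?_⟩
  · have hij' : (i : ℕ) ≠ j := Fin.val_ne_of_ne hij
    simp only [arfRFMatrix, Matrix.of_apply]
    split_ifs <;> first | omega | exact Int.ediv_nonneg (by omega) (by omega)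
  · have hdvd' : (m : ℤ) ∣ s := Int.natCast_dvd_natCast.2 hdvd
    set z : Fin m := ⟨0, by omega⟩
    change _ = arfRFMatrix m s k i ⬝ᵥ fun j => (arfGenerators m s j : ℤ)
    rcases Nat.eq_zero_or_pos i with hi | hi
    · rw [arfRFMatrix_row_zero hkm i ⟨m - k, by omega⟩ hi (by simp; omega)]
      simp [add_dotProduct, neg_dotProduct, arfGenerators, hi]
      omega
    rcases lt_trichotomy (i : ℕ) k with hik | hik | hik
    · rw [arfRFMatrix_row_of_lt i ⟨i + m - k, by omega⟩ hi hik hkm (by simp; omega) z rfl]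
      simp only [add_dotProduct, neg_dotProduct, smul_dotProduct, single_dotProduct, smul_eq_mul,
        one_mul]
      simp [arfGenerators, z, hi.ne']
      rw [Int.ediv_mul_cancel (dvd_sub hdvd' dvd_rfl)]
      omega
    · rw [arfRFMatrix_row_self i hik hk z rfl]
      simp only [add_dotProduct, neg_dotProduct, smul_dotProduct, single_dotProduct, smul_eq_mul,
        one_mul]
      simp [arfGenerators, z, hi.ne']
      rw [Int.ediv_mul_cancel (hdvd'.mul_left 2)]
      omega
    · rw [arfRFMatrix_row_of_gt i ⟨i - k, by omega⟩ hik hk (by simp; omega) z rfl]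
      simp only [add_dotProduct, neg_dotProduct, smul_dotProduct, single_dotProduct, smul_eq_mul,
        one_mul]
      simp [arfGenerators, z, hi.ne']
      rw [Int.ediv_mul_cancel hdvd']
      omega

end RFMatrix

theorem arf_multiple_RF_general (S : Set ℕ) (m s : ℕ)
    (hmul : HasMultiplicity S m)
    (hdvd : m ∣ s)
    (hS : S = (AddSubmonoid.closure (arfGenSet m s) : Set ℕ)) :
    pseudoFrobeniusSet S = Set.Icc (s - m + 1) (s - 1) ∧
    ∀ k : ℕ, 1 ≤ k → k ≤ m - 1 →
      IsRFMatrix (fun j : Fin m => if (j : ℕ) = 0 then m else s + (j : ℕ))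
        ((s : ℤ) - (k : ℤ))
        (Matrix.of fun i j : Fin m =>
          if (i : ℕ) = (j : ℕ) then (-1 : ℤ)
          else if (i : ℕ) = 0 ∧ (j : ℕ) + k = m then 1
          else if (i : ℕ) = k ∧ (j : ℕ) = 0 then 2 * (s : ℤ) / (m : ℤ)
          else if 0 < (i : ℕ) ∧ (i : ℕ) < k ∧ (j : ℕ) = 0 then
            ((s : ℤ) - (m : ℤ)) / (m : ℤ)
          else if 0 < (i : ℕ) ∧ (i : ℕ) < k ∧ (j : ℕ) + k = (i : ℕ) + m then 1
          else if k < (i : ℕ) ∧ (j : ℕ) = 0 then (s : ℤ) / (m : ℤ)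
          else if k < (i : ℕ) ∧ (j : ℕ) + k = (i : ℕ) then 1
          else 0) := by
  have hm : m ≠ 0 := hmul.2.1
  have hS' : S = {n | m ∣ n ∨ s ≤ n} :=
    hS.trans (Set.ext fun n => mem_closure_arfGenSet_iff hm hdvd)
  refine ⟨hS' ▸ pseudoFrobeniusSet_setOf_dvd_or_le hm hdvd, fun k hk hkm => ?_⟩
  have hs : s ≠ 0 := by
    rintro rfl
    have := hmul.2.2 1 (by simp [hS']) one_ne_zero
    omega
  exact isRFMatrix_arfRFMatrix hk (by omega) hdvd (Nat.le_of_dvd (Nat.pos_of_ne_zero hs) hdvd)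

/-- Let `S = ⟨m, s+1, …, s+m-1⟩` be an Arf numerical semigroup with
multiplicity `m` and conductor `s`, where `m ∣ s`. Then `PF(S) = {s-m+1, …, s-1}` and,
for each `1 ≤ k ≤ m-1`, the displayed matrix is an RF-matrix of `s-k`. (Generators are
indexed by `Fin m`, with index `0 ↔ n₁ = m` and index `j ↔ n_{j+1} = s + j` for `j ≥ 1`;
the paper's index `i ∈ {1, …, m}` corresponds to the Lean index `i - 1`.) -/
theorem arf_multiple_RF (S : Set ℕ) (m s : ℕ)
    (hNS : IsNumericalSemigroup S) (hArf : IsArf S)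
    (hmul : HasMultiplicity S m) (hcon : HasConductor S s)
    (hdvd : m ∣ s)
    (hS : S = (AddSubmonoid.closure (arfGenSet m s) : Set ℕ)) :
    pseudoFrobeniusSet S = Set.Icc (s - m + 1) (s - 1) ∧
    ∀ k : ℕ, 1 ≤ k → k ≤ m - 1 →
      IsRFMatrix (fun j : Fin m => if (j : ℕ) = 0 then m else s + (j : ℕ))
        ((s : ℤ) - (k : ℤ))
        (Matrix.of fun i j : Fin m =>
          if (i : ℕ) = (j : ℕ) then (-1 : ℤ)
          else if (i : ℕ) = 0 ∧ (j : ℕ) + k = m then 1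
          else if (i : ℕ) = k ∧ (j : ℕ) = 0 then 2 * (s : ℤ) / (m : ℤ)
          else if 0 < (i : ℕ) ∧ (i : ℕ) < k ∧ (j : ℕ) = 0 then
            ((s : ℤ) - (m : ℤ)) / (m : ℤ)
          else if 0 < (i : ℕ) ∧ (i : ℕ) < k ∧ (j : ℕ) + k = (i : ℕ) + m then 1
          else if k < (i : ℕ) ∧ (j : ℕ) = 0 then (s : ℤ) / (m : ℤ)
          else if k < (i : ℕ) ∧ (j : ℕ) + k = (i : ℕ) then 1
          else 0) :=
  arf_multiple_RF_general S m s hmul hdvd hS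
end
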